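/- Let L be a complete nonarchimedean field extension of ℚ_p, m ≥ 1, and f(z) = Σₗ aₗ zˡ with v(aₗ) + m·l → ∞. Define f_q(z) = Σ_{l≥0} aₗ · C(l+q−1, q) · z^{l+q}, where C is the binomial coefficient. Then for all x, z ∈ pᵐℤ_p one has f(z/(1 − x·z)) = Σ_{q=0}^∞ x^q · f_q(z), and the Gauss valuation satisfies v_C(f_q) ≥ v_C(f) + m·q, where v_C(g) = infₗ(v(coefficient of zˡ in g) + m·l). -/

import Mathlib

/-!
Put `r = p⁻ᵐ`. In an ultrametric field `‖1 - xz‖ = 1` when `‖xz‖ < 1`, so `w = z / (1 - xz)` again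
has `‖w‖ ≤ r` and `f(w)` converges. Expanding `(1 - xz)⁻ˡ = ∑_q C(l+q-1, q) (xz)^q` writes `f(w)`
as the double series `∑_{l,q} a_l C(l+q-1, q) x^q z^(l+q)`, whose terms are bounded by
`‖a_l‖ rˡ · (‖x‖ r)^q`. This bound tends to zero on `ℕ × ℕ`, and in a complete ultrametric field
that alone makes a family unconditionally summable, so the double series may be summed over `l`
first. The Gauss-norm estimate is `‖C(l+q-1, q)‖ ≤ 1`.
-/

open Filter Topology

lemma tendsto_cofinite_mul_of_tendsto_zero {α β : Type*} {u : α → ℝ} {v : β → ℝ}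
    (hu : Tendsto u cofinite (𝓝 0)) (hv : Tendsto v cofinite (𝓝 0)) :
    Tendsto (fun p : α × β => u p.1 * v p.2) cofinite (𝓝 0) := by
  rw [← coprod_cofinite, Filter.coprod, tendsto_sup]
  constructor
  · refine (hu.comp tendsto_comap).zero_mul_isBoundedUnder_le (isBoundedUnder_of ?_)
    obtain ⟨C, hC⟩ := hv.norm.bddAbove_range_of_cofinite
    exact ⟨C, fun p => hC ⟨p.2, rfl⟩⟩
  · refine isBoundedUnder_le_mul_tendsto_zero (isBoundedUnder_of ?_) (hv.comp tendsto_comap)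
    obtain ⟨C, hC⟩ := hu.norm.bddAbove_range_of_cofinite
    exact ⟨C, fun p => hC ⟨p.1, rfl⟩⟩

lemma hasSum_choose_add_sub_one_mul_pow {𝕜 : Type*} [NormedField 𝕜] {c : 𝕜}
    (hc : ‖c‖ < 1) (l : ℕ) :
    HasSum (fun q => ((l + q - 1).choose q : 𝕜) * c ^ q) ((1 - c)⁻¹ ^ l) := by
  cases l with
  | zero =>
    -- truncated subtraction: the coefficients are `(q - 1).choose q`, i.e. `1, 0, 0, …`
    convert hasSum_ite_eq 0 (1 : 𝕜) using 1
    · funext q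
      rcases q with _ | q <;> simp
    · simp
  | succ l =>
    convert hasSum_choose_mul_geometric_of_norm_lt_one l hc using 1
    · funext q
      rw [show l + 1 + q - 1 = q + l by omega, Nat.choose_symm_add]
    · rw [one_div, inv_pow]

namespace IsUltrametricDist

lemma summable_of_norm_le {α E : Type*} [NormedAddCommGroup E] [CompleteSpace E]
    [IsUltrametricDist E] {f : α → E} {g : α → ℝ} (hg : Tendsto g cofinite (𝓝 0))
    (hfg : ∀ i, ‖f i‖ ≤ g i) : Summable f :=
  NonarchimedeanAddGroup.summable_of_tendsto_cofinite_zero (squeeze_zero_norm hfg hg)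

variable {L : Type*} [NormedField L] [IsUltrametricDist L]

lemma norm_mul_natCast_le (b : L) (n : ℕ) : ‖b * n‖ ≤ ‖b‖ := by
  simpa [norm_mul] using
    mul_le_mul_of_nonneg_left (norm_natCast_le_one L n) (norm_nonneg b)

lemma norm_one_sub_of_norm_lt_one {y : L} (hy : ‖y‖ < 1) : ‖1 - y‖ = 1 := by
  rw [sub_eq_add_neg, norm_add_eq_max_of_norm_ne_norm (by simpa using hy.ne'), norm_neg,
    norm_one, max_eq_left hy.le]

end IsUltrametricDist

section MobiusExpansion

open IsUltrametricDist

variable {L : Type*} [NormedField L] [IsUltrametricDist L] {a : ℕ → L} {r : ℝ}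

lemma norm_mul_choose_mul_pow_le {z : L} (hz : ‖z‖ ≤ r) (q l : ℕ) :
    ‖a l * ((l + q - 1).choose q : L) * z ^ (l + q)‖ ≤ ‖a l‖ * r ^ l * r ^ q := by
  have hr : 0 ≤ r := (norm_nonneg z).trans hz
  rw [norm_mul _ (z ^ _), norm_pow, mul_assoc, ← pow_add]
  gcongr
  exact norm_mul_natCast_le _ _

lemma norm_mul_choose_mul_pow_le_iSup (hr : 0 ≤ r)
    (hbdd : BddAbove (Set.range fun l => ‖a l‖ * r ^ l)) (q l : ℕ) :
    ‖a l * ((l + q - 1).choose q : L)‖ * r ^ (l + q) ≤ (⨆ l', ‖a l'‖ * r ^ l') * r ^ q := by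
  calc ‖a l * ((l + q - 1).choose q : L)‖ * r ^ (l + q) ≤ ‖a l‖ * r ^ l * r ^ q := by
        rw [pow_add, ← mul_assoc]
        gcongr
        exact norm_mul_natCast_le _ _
    _ ≤ (⨆ l', ‖a l'‖ * r ^ l') * r ^ q := by
        gcongr
        exact le_ciSup hbdd l

variable [CompleteSpace L] (ha : Tendsto (fun l => ‖a l‖ * r ^ l) atTop (𝓝 0))
include ha

lemma summable_mul_pow_of_norm_le {w : L} (hw : ‖w‖ ≤ r) :
    Summable fun l => a l * w ^ l := by
  refine summable_of_norm_le (Nat.cofinite_eq_atTop ▸ ha) fun l => ?_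
  rw [norm_mul, norm_pow]
  gcongr

lemma summable_mul_choose_mul_pow {z : L} (hz : ‖z‖ ≤ r) (q : ℕ) :
    Summable fun l => a l * ((l + q - 1).choose q : L) * z ^ (l + q) :=
  summable_of_norm_le (Nat.cofinite_eq_atTop ▸ by simpa using ha.mul_const (r ^ q))
    (norm_mul_choose_mul_pow_le hz q)

lemma summable_pow_mul_tsum_mul_choose_mul_pow {x z : L} (hz : ‖z‖ ≤ r) (hxr : ‖x‖ * r < 1) :
    Summable fun q => x ^ q * ∑' l, a l * ((l + q - 1).choose q : L) * z ^ (l + q) := by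
  have hr : 0 ≤ r := (norm_nonneg z).trans hz
  set M := ⨆ l, ‖a l‖ * r ^ l
  have hbdd := ha.bddAbove_range
  have hM : 0 ≤ M := le_ciSup_of_le hbdd 0 (by positivity)
  refine summable_of_norm_le (g := fun q => M * (‖x‖ * r) ^ q) ?_ fun q => ?_
  · rw [Nat.cofinite_eq_atTop]
    simpa using (tendsto_pow_atTop_nhds_zero_of_lt_one (by positivity) hxr).const_mul M
  · rw [norm_mul, norm_pow, mul_pow, mul_left_comm]
    gcongr
    refine norm_tsum_le_of_forall_le_of_nonneg (by positivity) fun l => ?_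
    exact (norm_mul_choose_mul_pow_le hz q l).trans
      (mul_le_mul_of_nonneg_right (le_ciSup hbdd l) (by positivity))

theorem tsum_mul_div_one_sub_mul_pow {x z : L} (hz : ‖z‖ ≤ r) (hxr : ‖x‖ * r < 1) :
    ∑' l, a l * (z / (1 - x * z)) ^ l =
      ∑' q, x ^ q * ∑' l, a l * ((l + q - 1).choose q : L) * z ^ (l + q) := by
  have hr : 0 ≤ r := (norm_nonneg z).trans hz
  set F : ℕ → ℕ → L := fun l q => x ^ q * (a l * ((l + q - 1).choose q : L) * z ^ (l + q))
  have hxz : ‖x * z‖ < 1 := by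
    rw [norm_mul]
    exact (mul_le_mul_of_nonneg_left hz (norm_nonneg x)).trans_lt hxr
  have hrow : ∀ l, HasSum (F l) (a l * (z / (1 - x * z)) ^ l) := by
    intro l
    have hFl : F l = fun q => a l * z ^ l * (((l + q - 1).choose q : L) * (x * z) ^ q) :=
      funext fun q => by simp only [F]; ring
    rw [hFl, show a l * (z / (1 - x * z)) ^ l = a l * z ^ l * (1 - x * z)⁻¹ ^ l by ring]
    exact (hasSum_choose_add_sub_one_mul_pow hxz l).mul_left _
  have hF : Summable (Function.uncurry F) := by
    refine summable_of_norm_le (g := fun p => ‖a p.1‖ * r ^ p.1 * (‖x‖ * r) ^ p.2)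
      (tendsto_cofinite_mul_of_tendsto_zero (Nat.cofinite_eq_atTop ▸ ha) ?_) fun p => ?_
    · rw [Nat.cofinite_eq_atTop]
      exact tendsto_pow_atTop_nhds_zero_of_lt_one (by positivity) hxr
    · simp only [Function.uncurry, F, norm_mul (x ^ _), norm_pow]
      calc ‖x‖ ^ p.2 * ‖a p.1 * ((p.1 + p.2 - 1).choose p.2 : L) * z ^ (p.1 + p.2)‖
          ≤ ‖x‖ ^ p.2 * (‖a p.1‖ * r ^ p.1 * r ^ p.2) := by
            gcongr
            exact norm_mul_choose_mul_pow_le hz p.2 p.1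
        _ = ‖a p.1‖ * r ^ p.1 * (‖x‖ * r) ^ p.2 := by ring
  calc ∑' l, a l * (z / (1 - x * z)) ^ l = ∑' l, ∑' q, F l q :=
        tsum_congr fun l => (hrow l).tsum_eq.symm
    _ = ∑' q, ∑' l, F l q :=
        (hF.tsum_comm' (fun l => (hrow l).summable)
          fun q => (summable_mul_choose_mul_pow ha hz q).mul_left _).symm
    _ = _ := tsum_congr fun q => tsum_mul_left

end MobiusExpansion

theorem stmt_8 (p : ℕ) [Fact p.Prime] (L : Type*) [NontriviallyNormedField L]
    [CompleteSpace L] (hna : IsNonarchimedean fun x : L => ‖x‖)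
    (ι : ℚ_[p] →+* L) (hι : ∀ x, ‖ι x‖ = ‖x‖)
    (m : ℕ) (hm : 1 ≤ m) (a : ℕ → L)
    (ha : Tendsto (fun l : ℕ => ‖a l‖ * (p : ℝ) ^ (-(m * l : ℤ))) atTop (𝓝 0))
    (x z : ℚ_[p]) (hx : ‖x‖ ≤ (p : ℝ) ^ (-(m : ℤ))) (hz : ‖z‖ ≤ (p : ℝ) ^ (-(m : ℤ))) :
    Summable (fun l : ℕ => a l * ι (z / (1 - x * z)) ^ l) ∧
    (∀ q : ℕ, Summable fun l : ℕ =>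
      a l * ((l + q - 1).choose q : L) * ι z ^ (l + q)) ∧
    Summable (fun q : ℕ => ι x ^ q *
      ∑' l : ℕ, a l * ((l + q - 1).choose q : L) * ι z ^ (l + q)) ∧
    (∑' l : ℕ, a l * ι (z / (1 - x * z)) ^ l
      = ∑' q : ℕ, ι x ^ q *
          ∑' l : ℕ, a l * ((l + q - 1).choose q : L) * ι z ^ (l + q)) ∧
    (∀ q l : ℕ, ‖a l * ((l + q - 1).choose q : L)‖ * (p : ℝ) ^ (-(m * (l + q) : ℤ))
      ≤ (⨆ l' : ℕ, ‖a l'‖ * (p : ℝ) ^ (-(m * l' : ℤ))) * (p : ℝ) ^ (-(m * q : ℤ))) := by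
  have : IsUltrametricDist L := .isUltrametricDist_of_isNonarchimedean_norm hna
  set r : ℝ := (p : ℝ) ^ (-(m : ℤ))
  have hp : (1 : ℝ) < p := mod_cast (Fact.out : p.Prime).one_lt
  have hr : 0 ≤ r := by positivity
  have hr1 : r < 1 := zpow_lt_one_of_neg₀ hp (by omega)
  have hpow : ∀ k : ℕ, (p : ℝ) ^ (-(m * k : ℤ)) = r ^ k := fun k => by
    rw [← zpow_natCast, ← zpow_mul, neg_mul]
  have hpow_add : ∀ l q : ℕ, (p : ℝ) ^ (-(m * (l + q) : ℤ)) = r ^ (l + q) := fun l q => by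
    rw [← hpow]; push_cast; rfl
  simp only [hpow, hpow_add] at ha ⊢
  have hz' : ‖ι z‖ ≤ r := (hι z).trans_le hz
  have hxr : ‖ι x‖ * r < 1 := by
    rw [hι]; nlinarith [norm_nonneg x]
  have hw : ‖ι z / (1 - ι x * ι z)‖ ≤ r := by
    rw [norm_div, IsUltrametricDist.norm_one_sub_of_norm_lt_one, div_one]
    · exact hz'
    · rw [norm_mul]; nlinarith [norm_nonneg (ι x), norm_nonneg (ι z)]
  rw [map_div₀, map_sub, map_one, map_mul]
  exact ⟨summable_mul_pow_of_norm_le ha hw, summable_mul_choose_mul_pow ha hz',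
    summable_pow_mul_tsum_mul_choose_mul_pow ha hz' hxr, tsum_mul_div_one_sub_mul_pow ha hz' hxr,
    norm_mul_choose_mul_pow_le_iSup hr ha.bddAbove_range⟩
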